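/- arXiv:2010.05467 — 7 statements merged into one kernel-verified Lean document; each statement's English description precedes it below -/
import Mathlib

section
/- Each map W_{ij} : X → X, W_{ij}(x,y,z) = (u_i(x), v_j(y), F_{ij}(x,y,z)), is a contraction with respect to the metric d_δ, with contraction ratio at most c := max{ sup_{i,j}(δ_{ij} + δθ), sup_{i,j} α_{ij} } < 1 (indeed sup_{i,j}(δ_{ij} + δθ) ≤ 1/2). Consequently there exists a nonempty compact set A ⊆ X such that A = closure( ⋃_{i,j≥1} W_{ij}(A) ). -/
/-!
The maps `W i j` are triangular: the base part `(x, y) ↦ (uᵢ x, vⱼ y)` contracts by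
`δᵢⱼ < 1/2`, and the fibre part is `θ`-Lipschitz in the base and `αᵢⱼ`-Lipschitz in the fibre.
Weighting the fibre distance by `δ` makes the `θ`-cross term cost only `δθ ≤ 1/2 - δᵢⱼ`,
which gives the uniform contraction ratio `c < 1` for `d_δ`.

Since `d_δ` is equivalent to the ambient metric, the family `W` is uniformly equicontinuous on
the compact box `X`. The Hutchinson operator `T S = closure (⋃ W i j '' S)` maps `X` into
itself, so its iterates on `X` decrease; their intersection `A` is nonempty and compact,
`T A ⊆ A` by monotonicity, and `A ⊆ T A` because the iterates eventually lie in any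
neighbourhood of `A`, on which equicontinuity moves images only a little.
-/

open Set Metric

section Hutchinson

variable {α ι : Type*}

def hutchinson [TopologicalSpace α] (W : ι → α → α) (S : Set α) : Set α :=
  closure (⋃ i, W i '' S)

section Topological

variable [TopologicalSpace α] {W : ι → α → α} {S X : Set α}

theorem hutchinson_mono : Monotone (hutchinson W) :=
  fun _ _ h => closure_mono (iUnion_mono fun _ => image_mono h)

theorem hutchinson_subset (hX : IsClosed X) (hW : ∀ i, MapsTo (W i) X X) (hS : S ⊆ X) :
    hutchinson W S ⊆ X :=
  closure_minimal (iUnion_subset fun i => ((hW i).mono_left hS).image_subset) hX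

theorem Set.Nonempty.hutchinson [Nonempty ι] (hS : S.Nonempty) : (hutchinson W S).Nonempty :=
  ((hS.image (W (Classical.arbitrary ι))).mono (subset_iUnion (fun i => W i '' S) _)).closure

theorem antitone_iterate_hutchinson (hX : IsClosed X) (hW : ∀ i, MapsTo (W i) X X) :
    Antitone fun n => (hutchinson W)^[n] X :=
  antitone_nat_of_succ_le fun n => by
    rw [Function.iterate_succ_apply]
    exact hutchinson_mono.iterate n (hutchinson_subset hX hW subset_rfl)

theorem isClosed_iterate_hutchinson (hX : IsClosed X) (n : ℕ) :
    IsClosed ((hutchinson W)^[n] X) := by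
  cases n with
  | zero => exact hX
  | succ n => rw [Function.iterate_succ_apply']; exact isClosed_closure

theorem hutchinson_iInter_iterate_subset (hX : IsClosed X) (hW : ∀ i, MapsTo (W i) X X) :
    hutchinson W (⋂ n, (hutchinson W)^[n] X) ⊆ ⋂ n, (hutchinson W)^[n] X :=
  subset_iInter fun n => calc
    _ ⊆ hutchinson W ((hutchinson W)^[n] X) := hutchinson_mono (iInter_subset _ n)
    _ = (hutchinson W)^[n + 1] X := (Function.iterate_succ_apply' _ n X).symm
    _ ⊆ (hutchinson W)^[n] X := antitone_iterate_hutchinson hX hW n.le_succ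

end Topological

theorem UniformEquicontinuousOn.exists_dist_lt [PseudoMetricSpace α] {β : Type*}
    [PseudoMetricSpace β] {W : ι → α → β} {X : Set α} (hW : UniformEquicontinuousOn W X)
    {ε : ℝ} (hε : 0 < ε) :
    ∃ η > 0, ∀ p ∈ X, ∀ q ∈ X, dist p q < η → ∀ i, dist (W i p) (W i q) < ε := by
  obtain ⟨η, hη, h⟩ := ((uniformity_basis_dist.inf_principal (X ×ˢ X)).uniformEquicontinuousOn_iff
    uniformity_basis_dist).1 hW ε hε
  exact ⟨η, hη, fun p hp q hq hpq => h p q ⟨hpq, hp, hq⟩⟩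

variable [MetricSpace α] {W : ι → α → α} {X : Set α}

theorem iInter_iterate_hutchinson_subset (hX : IsCompact X) (hW : ∀ i, MapsTo (W i) X X)
    (hWX : UniformEquicontinuousOn W X) :
    ⋂ n, (hutchinson W)^[n] X ⊆ hutchinson W (⋂ n, (hutchinson W)^[n] X) := by
  set A := ⋂ n, (hutchinson W)^[n] X
  intro x hx
  rw [hutchinson, Metric.mem_closure_iff]
  intro ε hε
  obtain ⟨η, hη, hWη⟩ := hWX.exists_dist_lt (half_pos hε)
  obtain ⟨n, hn⟩ : ∃ n, (hutchinson W)^[n] X ⊆ thickening η A :=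
    exists_subset_nhds_of_isCompact' (antitone_iterate_hutchinson hX.isClosed hW).directed_ge
      (fun n => hX.of_isClosed_subset (isClosed_iterate_hutchinson hX.isClosed n)
        (antitone_iterate_hutchinson hX.isClosed hW n.zero_le))
      (isClosed_iterate_hutchinson hX.isClosed)
      fun a ha => isOpen_thickening.mem_nhds (self_subset_thickening hη A ha)
  have hxn : x ∈ hutchinson W ((hutchinson W)^[n] X) := by
    simpa only [Function.iterate_succ_apply'] using mem_iInter.1 hx (n + 1)
  obtain ⟨_, hy, hxy⟩ := Metric.mem_closure_iff.1 hxn (ε / 2) (half_pos hε)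
  obtain ⟨i, p, hp, rfl⟩ : ∃ i, ∃ p ∈ (hutchinson W)^[n] X, W i p = _ := by
    simpa only [mem_iUnion, mem_image] using hy
  obtain ⟨a, ha, hpa⟩ := mem_thickening_iff.1 (hn hp)
  have hpX : p ∈ X := antitone_iterate_hutchinson hX.isClosed hW n.zero_le hp
  have haX : a ∈ X := iInter_subset _ 0 ha
  refine ⟨W i a, mem_iUnion.2 ⟨i, mem_image_of_mem _ ha⟩, ?_⟩
  calc dist x (W i a) ≤ dist x (W i p) + dist (W i p) (W i a) := dist_triangle _ _ _
    _ < ε / 2 + ε / 2 := add_lt_add hxy (hWη p hpX a haX hpa i)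
    _ = ε := add_halves ε

theorem exists_eq_hutchinson_of_uniformEquicontinuousOn [Nonempty ι] (hX : IsCompact X)
    (hXne : X.Nonempty) (hW : ∀ i, MapsTo (W i) X X) (hWX : UniformEquicontinuousOn W X) :
    ∃ A ⊆ X, A.Nonempty ∧ IsCompact A ∧ A = hutchinson W A := by
  have hanti := antitone_iterate_hutchinson hX.isClosed hW
  have hclosed := isClosed_iterate_hutchinson (W := W) hX.isClosed
  refine ⟨⋂ n, (hutchinson W)^[n] X, iInter_subset _ 0, ?_, ?_, ?_⟩
  · refine IsCompact.nonempty_iInter_of_sequence_nonempty_isCompact_isClosed _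
      (fun n => hanti n.le_succ) (fun n => ?_) hX hclosed
    induction n with
    | zero => exact hXne
    | succ n ih => rw [Function.iterate_succ_apply']; exact ih.hutchinson
  · exact hX.of_isClosed_subset (isClosed_iInter hclosed) (iInter_subset _ 0)
  · exact (iInter_iterate_hutchinson_subset hX hW hWX).antisymm
      (hutchinson_iInter_iterate_subset hX.isClosed hW)

end Hutchinson

noncomputable section WeightedDist

-- `weightedDist δ` is the paper's `d_δ`, and `bivariateMap (u i) (v j) (F i j)` its `W i j`.
def weightedDist (δ : ℝ) (p q : ℝ × ℝ × ℝ) : ℝ :=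
  √((p.1 - q.1) ^ 2 + (p.2.1 - q.2.1) ^ 2) + δ * |p.2.2 - q.2.2|

def bivariateMap (f g : ℝ → ℝ) (F : ℝ × ℝ × ℝ → ℝ) (p : ℝ × ℝ × ℝ) : ℝ × ℝ × ℝ :=
  (f p.1, g p.2.1, F p)

theorem sqrt_sq_add_sq_le_max_mul {x y x' y' a b : ℝ} (ha : 0 ≤ a) (hb : 0 ≤ b)
    (hx : |x| ≤ a * |x'|) (hy : |y| ≤ b * |y'|) :
    √(x ^ 2 + y ^ 2) ≤ max a b * √(x' ^ 2 + y' ^ 2) := by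
  have hsq {z z' e : ℝ} (he : 0 ≤ e) (hz : |z| ≤ e * |z'|) (hem : e ≤ max a b) :
      z ^ 2 ≤ max a b ^ 2 * z' ^ 2 := by
    rw [← sq_abs z, ← sq_abs z', ← mul_pow]
    exact pow_le_pow_left₀ (abs_nonneg z) (hz.trans (by gcongr)) 2
  rw [← Real.sqrt_sq (ha.trans (le_max_left a b)), ← Real.sqrt_mul (sq_nonneg _)]
  exact Real.sqrt_le_sqrt (by
    linarith [hsq ha hx (le_max_left a b), hsq hb hy (le_max_right a b)])

theorem sqrt_sq_add_sq_le_abs_add_abs (x y : ℝ) : √(x ^ 2 + y ^ 2) ≤ |x| + |y| :=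
  Real.sqrt_le_iff.2 ⟨by positivity, by
    nlinarith [sq_abs x, sq_abs y, abs_nonneg x, abs_nonneg y]⟩

theorem dist_triple_eq_max_abs (p q : ℝ × ℝ × ℝ) :
    dist p q = max |p.1 - q.1| (max |p.2.1 - q.2.1| |p.2.2 - q.2.2|) := by
  simp only [Prod.dist_eq, Real.dist_eq]

theorem weightedDist_le_mul_dist {δ : ℝ} (hδ : 0 ≤ δ) (p q : ℝ × ℝ × ℝ) :
    weightedDist δ p q ≤ (2 + δ) * dist p q := by
  have hx : |p.1 - q.1| ≤ dist p q := by rw [dist_triple_eq_max_abs]; exact le_max_left _ _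
  have hy : |p.2.1 - q.2.1| ≤ dist p q := by
    rw [dist_triple_eq_max_abs]; exact (le_max_left _ _).trans (le_max_right _ _)
  have hz : |p.2.2 - q.2.2| ≤ dist p q := by
    rw [dist_triple_eq_max_abs]; exact (le_max_right _ _).trans (le_max_right _ _)
  have := sqrt_sq_add_sq_le_abs_add_abs (p.1 - q.1) (p.2.1 - q.2.1)
  unfold weightedDist
  linarith [mul_le_mul_of_nonneg_left hz hδ]

theorem dist_le_mul_weightedDist {δ : ℝ} (hδ : 0 < δ) (p q : ℝ × ℝ × ℝ) :
    dist p q ≤ max 1 δ⁻¹ * weightedDist δ p q := by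
  set s := √((p.1 - q.1) ^ 2 + (p.2.1 - q.2.1) ^ 2)
  set t := |p.2.2 - q.2.2|
  have hs : 0 ≤ s := Real.sqrt_nonneg _
  have ht : 0 ≤ δ * t := by positivity
  have hx : |p.1 - q.1| ≤ s := Real.abs_le_sqrt (le_add_of_nonneg_right (sq_nonneg _))
  have hy : |p.2.1 - q.2.1| ≤ s := Real.abs_le_sqrt (le_add_of_nonneg_left (sq_nonneg _))
  have hz : t ≤ δ⁻¹ * (s + δ * t) := by
    rw [mul_add, inv_mul_cancel_left₀ hδ.ne']
    linarith [mul_nonneg (inv_nonneg.2 hδ.le) hs]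
  calc dist p q ≤ max (1 * (s + δ * t)) (δ⁻¹ * (s + δ * t)) := by
        rw [dist_triple_eq_max_abs]
        exact max_le (le_max_of_le_left (by linarith))
          (max_le (le_max_of_le_left (by linarith)) (le_max_of_le_right hz))
    _ = max 1 δ⁻¹ * weightedDist δ p q := (max_mul_of_nonneg _ _ (add_nonneg hs ht)).symm

theorem lipschitzOnWith_of_weightedDist_le {f : ℝ × ℝ × ℝ → ℝ × ℝ × ℝ} {X : Set (ℝ × ℝ × ℝ)}
    {δ c : ℝ} (hδ : 0 < δ) (hc : 0 ≤ c)
    (hf : ∀ p ∈ X, ∀ q ∈ X, weightedDist δ (f p) (f q) ≤ c * weightedDist δ p q) :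
    LipschitzOnWith (max 1 δ⁻¹ * c * (2 + δ)).toNNReal f X :=
  LipschitzOnWith.of_dist_le' fun p hp q hq => calc
    dist (f p) (f q) ≤ max 1 δ⁻¹ * weightedDist δ (f p) (f q) := dist_le_mul_weightedDist hδ _ _
    _ ≤ max 1 δ⁻¹ * (c * ((2 + δ) * dist p q)) :=
      mul_le_mul_of_nonneg_left ((hf p hp q hq).trans (mul_le_mul_of_nonneg_left
        (weightedDist_le_mul_dist hδ.le p q) hc)) (zero_le_one.trans (le_max_left _ _))
    _ = max 1 δ⁻¹ * c * (2 + δ) * dist p q := by ring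

variable {I J K : Set ℝ} {f g : ℝ → ℝ} {F : ℝ × ℝ × ℝ → ℝ}

theorem mapsTo_bivariateMap (hf : MapsTo f I I) (hg : MapsTo g J J)
    (hF : ∀ p ∈ I ×ˢ J ×ˢ K, F p ∈ K) :
    MapsTo (bivariateMap f g F) (I ×ˢ J ×ˢ K) (I ×ˢ J ×ˢ K) :=
  fun p hp => ⟨hf hp.1, hg hp.2.1, hF p hp⟩

theorem abs_sub_le_of_lipschitz_xy_of_lipschitz_z {θ α : ℝ}
    (hxy : ∀ p ∈ I ×ˢ J ×ˢ K, ∀ q ∈ I ×ˢ J ×ˢ K, p.2.2 = q.2.2 →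
      |F p - F q| ≤ θ * √((p.1 - q.1) ^ 2 + (p.2.1 - q.2.1) ^ 2))
    (hz : ∀ p ∈ I ×ˢ J ×ˢ K, ∀ q ∈ I ×ˢ J ×ˢ K, p.1 = q.1 → p.2.1 = q.2.1 →
      |F p - F q| ≤ α * |p.2.2 - q.2.2|)
    {p q : ℝ × ℝ × ℝ} (hp : p ∈ I ×ˢ J ×ˢ K) (hq : q ∈ I ×ˢ J ×ˢ K) :
    |F p - F q| ≤ θ * √((p.1 - q.1) ^ 2 + (p.2.1 - q.2.1) ^ 2) + α * |p.2.2 - q.2.2| := by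
  have hq' : (q.1, q.2.1, p.2.2) ∈ I ×ˢ J ×ˢ K := ⟨hq.1, hq.2.1, hp.2.2⟩
  calc |F p - F q| ≤ |F p - F (q.1, q.2.1, p.2.2)| + |F (q.1, q.2.1, p.2.2) - F q| :=
        abs_sub_le _ _ _
    _ ≤ _ := add_le_add (hxy p hp _ hq' rfl) (hz _ hq' q hq rfl rfl)

theorem weightedDist_bivariateMap_le {L₁ L₂ θ α δ c : ℝ} (hL₁ : 0 ≤ L₁) (hL₂ : 0 ≤ L₂)
    (hδ : 0 ≤ δ) (hf : ∀ x ∈ I, ∀ x' ∈ I, |f x - f x'| ≤ L₁ * |x - x'|)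
    (hg : ∀ y ∈ J, ∀ y' ∈ J, |g y - g y'| ≤ L₂ * |y - y'|)
    (hxy : ∀ p ∈ I ×ˢ J ×ˢ K, ∀ q ∈ I ×ˢ J ×ˢ K, p.2.2 = q.2.2 →
      |F p - F q| ≤ θ * √((p.1 - q.1) ^ 2 + (p.2.1 - q.2.1) ^ 2))
    (hz : ∀ p ∈ I ×ˢ J ×ˢ K, ∀ q ∈ I ×ˢ J ×ˢ K, p.1 = q.1 → p.2.1 = q.2.1 →
      |F p - F q| ≤ α * |p.2.2 - q.2.2|)
    (hLc : max L₁ L₂ + δ * θ ≤ c) (hαc : α ≤ c)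
    {p q : ℝ × ℝ × ℝ} (hp : p ∈ I ×ˢ J ×ˢ K) (hq : q ∈ I ×ˢ J ×ˢ K) :
    weightedDist δ (bivariateMap f g F p) (bivariateMap f g F q) ≤ c * weightedDist δ p q := by
  set s := √((p.1 - q.1) ^ 2 + (p.2.1 - q.2.1) ^ 2)
  set t := |p.2.2 - q.2.2|
  have hplanar : √((f p.1 - f q.1) ^ 2 + (g p.2.1 - g q.2.1) ^ 2) ≤ max L₁ L₂ * s :=
    sqrt_sq_add_sq_le_max_mul hL₁ hL₂ (hf _ hp.1 _ hq.1) (hg _ hp.2.1 _ hq.2.1)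
  have hF := abs_sub_le_of_lipschitz_xy_of_lipschitz_z hxy hz hp hq
  have hs : 0 ≤ s := Real.sqrt_nonneg _
  have ht : 0 ≤ δ * t := by positivity
  calc weightedDist δ (bivariateMap f g F p) (bivariateMap f g F q)
      ≤ max L₁ L₂ * s + δ * (θ * s + α * t) := add_le_add hplanar (mul_le_mul_of_nonneg_left hF hδ)
    _ = (max L₁ L₂ + δ * θ) * s + α * (δ * t) := by ring
    _ ≤ c * s + c * (δ * t) := by gcongr
    _ = c * weightedDist δ p q := (mul_add c s (δ * t)).symm

end WeightedDist

section Margin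

variable {ι : Type*} {m : ι → ℝ} {θ : ℝ}

theorem iInf_one_sub_two_mul_div_pos [Nonempty ι] {r : ℝ} (hθ : 0 < θ) (hm : ∀ i, m i ≤ r)
    (hr : r < 1 / 2) : 0 < ⨅ i, (1 - 2 * m i) / (2 * θ) := by
  have hθ2 : 0 < 2 * θ := by positivity
  exact (div_pos (by linarith : (0 : ℝ) < 1 - 2 * r) hθ2).trans_le
    (le_ciInf fun i => div_le_div_of_nonneg_right (by linarith [hm i]) hθ2.le)

theorem add_iInf_one_sub_two_mul_div_mul_le_half (hθ : 0 < θ) (hm : BddAbove (range m))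
    (i : ι) : m i + (⨅ i, (1 - 2 * m i) / (2 * θ)) * θ ≤ 1 / 2 := by
  obtain ⟨r, hr⟩ := hm
  have hbdd : BddBelow (range fun i => (1 - 2 * m i) / (2 * θ)) :=
    ⟨(1 - 2 * r) / (2 * θ), forall_mem_range.2 fun j => by gcongr; exact hr ⟨j, rfl⟩⟩
  have hi := ciInf_le hbdd i
  rw [le_div_iff₀ (by positivity)] at hi
  linarith

end Margin

theorem contraction_and_attractor_of_countable_bivariate_IFS_general
    (a b c d k₁ k₂ : ℝ) (hab : a < b) (hcd : c < d) (hk : k₁ < k₂)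
    (X : Set (ℝ × ℝ × ℝ)) (hX : X = (Icc a b) ×ˢ ((Icc c d) ×ˢ (Icc k₁ k₂)))
    (u : ℕ → ℝ → ℝ) (v : ℕ → ℝ → ℝ)
    (A B : ℕ → ℝ) (hApos : ∀ i, 0 < A i) (hBpos : ∀ j, 0 < B j)
    (hu : ∀ i, MapsTo (u i) (Icc a b) (Icc a b))
    (hv : ∀ j, MapsTo (v j) (Icc c d) (Icc c d))
    (huLip : ∀ i, ∀ x ∈ Icc a b, ∀ x' ∈ Icc a b, |u i x - u i x'| ≤ A i * |x - x'|)
    (hvLip : ∀ j, ∀ y ∈ Icc c d, ∀ y' ∈ Icc c d, |v j y - v j y'| ≤ B j * |y - y'|)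
    (r : ℝ) (hr : r < 1/2) (hdeltab : ∀ i j, max (A i) (B j) ≤ r)
    (F : ℕ → ℕ → ℝ × ℝ × ℝ → ℝ)
    (hFmaps : ∀ i j, ∀ p ∈ X, F i j p ∈ Icc k₁ k₂)
    (θ : ℝ) (hθ : 0 < θ)
    (hFxy : ∀ i j, ∀ p ∈ X, ∀ q ∈ X, p.2.2 = q.2.2 →
      |F i j p - F i j q| ≤ θ * Real.sqrt ((p.1 - q.1) ^ 2 + (p.2.1 - q.2.1) ^ 2))
    (α : ℕ → ℕ → ℝ) (hαpos : ∀ i j, 0 < α i j)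
    (sα : ℝ) (hsα : sα < 1) (hαb : ∀ i j, α i j ≤ sα)
    (hFz : ∀ i j, ∀ p ∈ X, ∀ q ∈ X, p.1 = q.1 → p.2.1 = q.2.1 →
      |F i j p - F i j q| ≤ α i j * |p.2.2 - q.2.2|)
    (δ : ℝ) (hδ : δ = ⨅ p : ℕ × ℕ, (1 - 2 * max (A p.1) (B p.2)) / (2 * θ))
    (dδ : ℝ × ℝ × ℝ → ℝ × ℝ × ℝ → ℝ)
    (hd : ∀ p q, dδ p q =
      Real.sqrt ((p.1 - q.1) ^ 2 + (p.2.1 - q.2.1) ^ 2) + δ * |p.2.2 - q.2.2|)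
    (W : ℕ → ℕ → ℝ × ℝ × ℝ → ℝ × ℝ × ℝ)
    (hW : ∀ i j p, W i j p = (u i p.1, v j p.2.1, F i j p))
    (cc : ℝ)
    (hcc : cc = max (⨆ p : ℕ × ℕ, (max (A p.1) (B p.2) + δ * θ))
                    (⨆ p : ℕ × ℕ, α p.1 p.2)) :
    (⨆ p : ℕ × ℕ, (max (A p.1) (B p.2) + δ * θ)) ≤ 1 / 2 ∧
    cc < 1 ∧
    (∀ i j, ∀ p ∈ X, ∀ q ∈ X, dδ (W i j p) (W i j q) ≤ cc * dδ p q) ∧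
    ∃ A₀ : Set (ℝ × ℝ × ℝ), A₀ ⊆ X ∧ A₀.Nonempty ∧ IsCompact A₀ ∧
      A₀ = closure (⋃ i, ⋃ j, W i j '' A₀) := by
  have hm : ∀ p : ℕ × ℕ, max (A p.1) (B p.2) ≤ r := fun p => hdeltab p.1 p.2
  have hδpos : 0 < δ := hδ ▸ iInf_one_sub_two_mul_div_pos hθ hm hr
  have hhalf : ∀ p : ℕ × ℕ, max (A p.1) (B p.2) + δ * θ ≤ 1 / 2 :=
    hδ ▸ add_iInf_one_sub_two_mul_div_mul_le_half hθ ⟨r, forall_mem_range.2 hm⟩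
  have hαb' : ∀ p : ℕ × ℕ, α p.1 p.2 ≤ sα := fun p => hαb p.1 p.2
  have hLc : ∀ i j, max (A i) (B j) + δ * θ ≤ cc := fun i j => hcc ▸ le_max_of_le_left
    (le_ciSup (f := fun p : ℕ × ℕ => max (A p.1) (B p.2) + δ * θ)
      ⟨1 / 2, forall_mem_range.2 hhalf⟩ (i, j))
  have hαc : ∀ i j, α i j ≤ cc := fun i j => hcc ▸ le_max_of_le_right
    (le_ciSup (f := fun p : ℕ × ℕ => α p.1 p.2) ⟨sα, forall_mem_range.2 hαb'⟩ (i, j))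
  have hcc1 : cc < 1 :=
    hcc ▸ max_lt ((ciSup_le hhalf).trans_lt (by norm_num)) ((ciSup_le hαb').trans_lt hsα)
  obtain rfl : dδ = weightedDist δ := funext₂ hd
  obtain rfl : W = fun i j => bivariateMap (u i) (v j) (F i j) := by
    funext i j p
    exact hW i j p
  have hcontr : ∀ i j, ∀ p ∈ X, ∀ q ∈ X, weightedDist δ (bivariateMap (u i) (v j) (F i j) p)
      (bivariateMap (u i) (v j) (F i j) q) ≤ cc * weightedDist δ p q := by
    subst hX
    exact fun i j p hp q hq => weightedDist_bivariateMap_le (hApos i).le (hBpos j).le hδpos.le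
      (huLip i) (hvLip j) (hFxy i j) (hFz i j) (hLc i j) (hαc i j) hp hq
  refine ⟨ciSup_le hhalf, hcc1, hcontr, ?_⟩
  have hequi : UniformEquicontinuousOn
      (fun p : ℕ × ℕ => bivariateMap (u p.1) (v p.2) (F p.1 p.2)) X :=
    LipschitzOnWith.uniformEquicontinuousOn _ _ fun p => lipschitzOnWith_of_weightedDist_le hδpos
      ((hαpos 0 0).le.trans (hαc 0 0)) (hcontr p.1 p.2)
  subst hX
  obtain ⟨A₀, hA₀X, hA₀ne, hA₀c, hA₀⟩ := exists_eq_hutchinson_of_uniformEquicontinuousOn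
    (isCompact_Icc.prod (isCompact_Icc.prod isCompact_Icc))
    ((nonempty_Icc.2 hab.le).prod ((nonempty_Icc.2 hcd.le).prod (nonempty_Icc.2 hk.le)))
    (fun p : ℕ × ℕ => mapsTo_bivariateMap (hu p.1) (hv p.2) (hFmaps p.1 p.2)) hequi
  exact ⟨A₀, hA₀X, hA₀ne, hA₀c, by rwa [hutchinson, iUnion_prod'] at hA₀⟩

/-- Each map `W i j (x,y,z) = (uᵢ x, vⱼ y, Fᵢⱼ (x,y,z))` on
`X = I × J × K` is a contraction for the metric
`d_δ((x,y,z),(x',y',z')) = ‖(x,y)-(x',y')‖ + δ|z-z'|`, with contraction ratio at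
most `c = max (⨆ (δᵢⱼ + δθ)) (⨆ αᵢⱼ) < 1` (indeed `⨆ (δᵢⱼ + δθ) ≤ 1/2`);
consequently there is a nonempty compact `A ⊆ X` with
`A = closure (⋃ i j, W i j '' A)`. -/
theorem contraction_and_attractor_of_countable_bivariate_IFS
    (a b c d k₁ k₂ : ℝ) (hab : a < b) (hcd : c < d) (hk : k₁ < k₂)
    (X : Set (ℝ × ℝ × ℝ)) (hX : X = (Icc a b) ×ˢ ((Icc c d) ×ˢ (Icc k₁ k₂)))
    (u : ℕ → ℝ → ℝ) (v : ℕ → ℝ → ℝ)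
    (A B : ℕ → ℝ) (hApos : ∀ i, 0 < A i) (hBpos : ∀ j, 0 < B j)
    (hu : ∀ i, MapsTo (u i) (Icc a b) (Icc a b))
    (hv : ∀ j, MapsTo (v j) (Icc c d) (Icc c d))
    (huLip : ∀ i, ∀ x ∈ Icc a b, ∀ x' ∈ Icc a b, |u i x - u i x'| ≤ A i * |x - x'|)
    (hvLip : ∀ j, ∀ y ∈ Icc c d, ∀ y' ∈ Icc c d, |v j y - v j y'| ≤ B j * |y - y'|)
    (r : ℝ) (hr : r < 1/2) (hdeltab : ∀ i j, max (A i) (B j) ≤ r)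
    (F : ℕ → ℕ → ℝ × ℝ × ℝ → ℝ)
    (hFcont : ∀ i j, ContinuousOn (F i j) X)
    (hFmaps : ∀ i j, ∀ p ∈ X, F i j p ∈ Icc k₁ k₂)
    (θ : ℝ) (hθ : 0 < θ)
    (hFxy : ∀ i j, ∀ p ∈ X, ∀ q ∈ X, p.2.2 = q.2.2 →
      |F i j p - F i j q| ≤ θ * Real.sqrt ((p.1 - q.1) ^ 2 + (p.2.1 - q.2.1) ^ 2))
    (α : ℕ → ℕ → ℝ) (hαpos : ∀ i j, 0 < α i j)
    (sα : ℝ) (hsα : sα < 1) (hαb : ∀ i j, α i j ≤ sα)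
    (hFz : ∀ i j, ∀ p ∈ X, ∀ q ∈ X, p.1 = q.1 → p.2.1 = q.2.1 →
      |F i j p - F i j q| ≤ α i j * |p.2.2 - q.2.2|)
    (δ : ℝ) (hδ : δ = ⨅ p : ℕ × ℕ, (1 - 2 * max (A p.1) (B p.2)) / (2 * θ))
    (dδ : ℝ × ℝ × ℝ → ℝ × ℝ × ℝ → ℝ)
    (hd : ∀ p q, dδ p q =
      Real.sqrt ((p.1 - q.1) ^ 2 + (p.2.1 - q.2.1) ^ 2) + δ * |p.2.2 - q.2.2|)
    (W : ℕ → ℕ → ℝ × ℝ × ℝ → ℝ × ℝ × ℝ)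
    (hW : ∀ i j p, W i j p = (u i p.1, v j p.2.1, F i j p))
    (cc : ℝ)
    (hcc : cc = max (⨆ p : ℕ × ℕ, (max (A p.1) (B p.2) + δ * θ))
                    (⨆ p : ℕ × ℕ, α p.1 p.2)) :
    (⨆ p : ℕ × ℕ, (max (A p.1) (B p.2) + δ * θ)) ≤ 1 / 2 ∧
    cc < 1 ∧
    (∀ i j, ∀ p ∈ X, ∀ q ∈ X, dδ (W i j p) (W i j q) ≤ cc * dδ p q) ∧
    ∃ A₀ : Set (ℝ × ℝ × ℝ), A₀ ⊆ X ∧ A₀.Nonempty ∧ IsCompact A₀ ∧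
      A₀ = closure (⋃ i, ⋃ j, W i j '' A₀) :=
  contraction_and_attractor_of_countable_bivariate_IFS_general a b c d k₁ k₂ hab hcd hk X hX u v A B
    hApos hBpos hu hv huLip hvLip r hr hdeltab F hFmaps θ hθ hFxy α hαpos sα hsα hαb hFz δ hδ dδ hd
    W hW cc hcc
end

section
/- The set A := closure( ⋃_{m,n≥1} A_{m,n} ) is a nonempty compact subset of X and is a set fixed point of the countable iterated function system, i.e., A = closure( ⋃_{i,j≥1} ω_{ij}(A) ). -/
open Set

/-- If a nonempty compact set `K` is subinvariant for a sub-IFS and a nonempty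
compact set `L` is superinvariant for a larger IFS, then `K ⊆ L`. -/
lemma aux_sub_attractor {X : Type*} [MetricSpace X]
    (ω : ℕ → ℕ → X → X) (r : ℕ → ℕ → NNReal) (s : NNReal) (hs : s < 1)
    (hrs : ∀ i j, r i j ≤ s) (hω : ∀ i j, LipschitzWith (r i j) (ω i j))
    {m n m' n' : ℕ} (hm : m ≤ m') (hn : n ≤ n') {K L : Set X}
    (hK : IsCompact K) (hKne : K.Nonempty) (hL : IsCompact L) (hLne : L.Nonempty)
    (hKfix : K ⊆ ⋃ i ∈ Finset.Icc 1 m, ⋃ j ∈ Finset.Icc 1 n, ω i j '' K)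
    (hLfix : (⋃ i ∈ Finset.Icc 1 m', ⋃ j ∈ Finset.Icc 1 n', ω i j '' L) ⊆ L) :
    K ⊆ L := by
  obtain ⟨x0, hx0K, hx0max⟩ := hK.exists_isMaxOn hKne
    (Metric.continuous_infDist_pt L).continuousOn
  have hx0 : Metric.infDist x0 L = 0 := by
    have hx0mem := hKfix hx0K
    simp only [mem_iUnion, mem_image, Finset.mem_Icc] at hx0mem
    obtain ⟨i, ⟨hi1, him⟩, j, ⟨hj1, hjn⟩, y, hyK, hxy⟩ := hx0mem
    obtain ⟨b, hbL, hb⟩ := hL.exists_infDist_eq_dist hLne y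
    have hωb : ω i j b ∈ L := by
      apply hLfix
      simp only [mem_iUnion, mem_image, Finset.mem_Icc]
      exact ⟨i, ⟨hi1, him.trans hm⟩, j, ⟨hj1, hjn.trans hn⟩, b, hbL, rfl⟩
    have h1 : Metric.infDist x0 L ≤ dist x0 (ω i j b) :=
      Metric.infDist_le_dist_of_mem hωb
    have h2 : dist x0 (ω i j b) ≤ (s : ℝ) * dist y b := by
      rw [← hxy]
      calc dist (ω i j y) (ω i j b) ≤ (r i j : ℝ) * dist y b :=
            (hω i j).dist_le_mul y b
        _ ≤ (s : ℝ) * dist y b :=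
            mul_le_mul_of_nonneg_right (by exact_mod_cast hrs i j) dist_nonneg
    have h3 : (s : ℝ) * dist y b ≤ (s : ℝ) * Metric.infDist x0 L := by
      rw [← hb]
      exact mul_le_mul_of_nonneg_left (hx0max hyK) s.coe_nonneg
    have h4 : Metric.infDist x0 L ≤ (s : ℝ) * Metric.infDist x0 L :=
      h1.trans (h2.trans h3)
    have h5 : (0 : ℝ) ≤ Metric.infDist x0 L := Metric.infDist_nonneg
    have hs' : (s : ℝ) < 1 := by exact_mod_cast hs
    nlinarith
  intro x hx
  rw [hL.isClosed.mem_iff_infDist_zero hLne]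
  have h6 : Metric.infDist x L ≤ Metric.infDist x0 L := hx0max hx
  have h5 : (0 : ℝ) ≤ Metric.infDist x L := Metric.infDist_nonneg
  linarith

/-- The closure of the union of the attractors of the partial
IFSs is a nonempty compact set fixed point of the countable IFS:
`A = closure (⋃ i ≥ 1, ⋃ j ≥ 1, ω i j '' A)`. -/
theorem closure_union_partial_attractors_is_set_fixed_point
    {X : Type*} [MetricSpace X] [CompactSpace X]
    (ω : ℕ → ℕ → X → X) (r : ℕ → ℕ → NNReal) (s : NNReal) (hs : s < 1)
    (hrs : ∀ i j, r i j ≤ s) (hω : ∀ i j, LipschitzWith (r i j) (ω i j))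
    (A : ℕ → ℕ → Set X)
    (hne : ∀ m ≥ 1, ∀ n ≥ 1, (A m n).Nonempty)
    (hcpt : ∀ m ≥ 1, ∀ n ≥ 1, IsCompact (A m n))
    (hA : ∀ m ≥ 1, ∀ n ≥ 1,
      A m n = ⋃ i ∈ Finset.Icc 1 m, ⋃ j ∈ Finset.Icc 1 n, ω i j '' (A m n)) :
    (closure (⋃ m ∈ Ici 1, ⋃ n ∈ Ici 1, A m n)).Nonempty ∧
    IsCompact (closure (⋃ m ∈ Ici 1, ⋃ n ∈ Ici 1, A m n)) ∧
    closure (⋃ m ∈ Ici 1, ⋃ n ∈ Ici 1, A m n) =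
      closure (⋃ i ∈ Ici 1, ⋃ j ∈ Ici 1,
        ω i j '' closure (⋃ m ∈ Ici 1, ⋃ n ∈ Ici 1, A m n)) := by
  set U : Set X := ⋃ m ∈ Ici 1, ⋃ n ∈ Ici 1, A m n with hU
  have hsubU : ∀ m ≥ 1, ∀ n ≥ 1, A m n ⊆ U := by
    intro m hm n hn x hx
    simp only [hU, mem_iUnion, mem_Ici]
    exact ⟨m, hm, n, hn, hx⟩
  -- monotonicity of attractors
  have hmono : ∀ m ≥ 1, ∀ n ≥ 1, ∀ m' ≥ m, ∀ n' ≥ n, A m n ⊆ A m' n' := by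
    intro m hm n hn m' hm' n' hn'
    have hm'1 : 1 ≤ m' := hm.trans hm'
    have hn'1 : 1 ≤ n' := hn.trans hn'
    exact aux_sub_attractor ω r s hs hrs hω hm' hn'
      (hcpt m hm n hn) (hne m hm n hn) (hcpt m' hm'1 n' hn'1) (hne m' hm'1 n' hn'1)
      ((hA m hm n hn).le) ((hA m' hm'1 n' hn'1).ge)
  -- each ω i j (i,j ≥ 1) maps U into U
  have hmaps : ∀ i ≥ 1, ∀ j ≥ 1, ω i j '' U ⊆ U := by
    intro i hi j hj x hx
    obtain ⟨y, hy, rfl⟩ := hx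
    simp only [hU, mem_iUnion, mem_Ici] at hy
    obtain ⟨m, hm, n, hn, hy⟩ := hy
    have hy' : y ∈ A (max m i) (max n j) :=
      hmono m hm n hn _ (le_max_left m i) _ (le_max_left n j) hy
    have hωy : ω i j y ∈ A (max m i) (max n j) := by
      rw [hA (max m i) (hm.trans (le_max_left m i)) (max n j) (hn.trans (le_max_left n j))]
      simp only [mem_iUnion, mem_image, Finset.mem_Icc]
      exact ⟨i, ⟨hi, le_max_right m i⟩, j, ⟨hj, le_max_right n j⟩, y, hy', rfl⟩
    exact hsubU _ (hm.trans (le_max_left m i)) _ (hn.trans (le_max_left n j)) hωy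
  have hUne : U.Nonempty := (hne 1 le_rfl 1 le_rfl).mono (hsubU 1 le_rfl 1 le_rfl)
  refine ⟨hUne.closure, isClosed_closure.isCompact, ?_⟩
  apply le_antisymm
  · -- U ⊆ V
    apply closure_mono
    intro x hx
    simp only [hU, mem_iUnion, mem_Ici] at hx
    obtain ⟨m, hm, n, hn, hx⟩ := hx
    have hx' := hx
    rw [hA m hm n hn] at hx'
    simp only [mem_iUnion, mem_image, Finset.mem_Icc] at hx'
    obtain ⟨i, ⟨hi1, _⟩, j, ⟨hj1, _⟩, y, hy, hxy⟩ := hx'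
    simp only [mem_iUnion, mem_Ici]
    exact ⟨i, hi1, j, hj1, y, subset_closure (hsubU m hm n hn hy), hxy⟩
  · -- closure V ⊆ closure U
    apply closure_minimal _ isClosed_closure
    intro x hx
    simp only [mem_iUnion, mem_Ici] at hx
    obtain ⟨i, hi, j, hj, hx⟩ := hx
    have hcont : Continuous (ω i j) := (hω i j).continuous
    have h1 : ω i j '' closure U ⊆ closure (ω i j '' U) :=
      image_closure_subset_closure_image hcont
    have h2 : closure (ω i j '' U) ⊆ closure U :=
      closure_mono ((hmaps i hi j hj).trans subset_rfl)
    exact h2 (h1 hx)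
end

section
/- Let A := closure( ⋃_{m,n≥1} A_{m,n} ). Then the double sequence of partial attractors (A_{m,n}) converges to A in the Hausdorff metric: the Hausdorff distance between A_{m,n} and A tends to 0 along the product filter atTop × atTop in (m,n). -/
open Set Filter Metric

lemma my_subset_of_invariant
    {X : Type*} [MetricSpace X] [CompactSpace X]
    (ω : ℕ → ℕ → X → X) (r : ℕ → ℕ → NNReal) (s : NNReal) (hs : s < 1)
    (hrs : ∀ i j, r i j ≤ s) (hω : ∀ i j, LipschitzWith (r i j) (ω i j))
    (K K' : Set X) (hKne : K.Nonempty) (hK'ne : K'.Nonempty)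
    (hKc : IsCompact K) (hK'c : IsCompact K')
    (m n m' n' : ℕ) (hm : m ≤ m') (hn : n ≤ n')
    (hK : K = ⋃ i ∈ Finset.Icc 1 m, ⋃ j ∈ Finset.Icc 1 n, ω i j '' K)
    (hK' : K' = ⋃ i ∈ Finset.Icc 1 m', ⋃ j ∈ Finset.Icc 1 n', ω i j '' K') :
    K ⊆ K' := by
  have hc : Continuous fun x => infDist x K' := continuous_infDist_pt K'
  obtain ⟨x0, hx0K, hmax⟩ := hKc.exists_isMaxOn hKne hc.continuousOn
  set D := infDist x0 K' with hD
  have hDs : D ≤ s * D := by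
    have hx0 : x0 ∈ ⋃ i ∈ Finset.Icc 1 m, ⋃ j ∈ Finset.Icc 1 n, ω i j '' K := hK ▸ hx0K
    simp only [mem_iUnion, mem_image] at hx0
    obtain ⟨i, hi, j, hj, y, hyK, hxy⟩ := hx0
    obtain ⟨y', hy'K', hyy'⟩ := hK'c.exists_infDist_eq_dist hK'ne y
    have hωy' : ω i j y' ∈ K' := by
      rw [hK']
      refine mem_iUnion₂.2 ⟨i, ?_, mem_iUnion₂.2 ⟨j, ?_, mem_image_of_mem _ hy'K'⟩⟩
      · simp only [Finset.mem_Icc] at hi ⊢; omega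
      · simp only [Finset.mem_Icc] at hj ⊢; omega
    calc D ≤ dist x0 (ω i j y') := infDist_le_dist_of_mem hωy'
      _ = dist (ω i j y) (ω i j y') := by rw [hxy]
      _ ≤ (r i j : ℝ) * dist y y' := (hω i j).dist_le_mul y y'
      _ ≤ (s : ℝ) * dist y y' := by
          gcongr; exact_mod_cast hrs i j
      _ = (s : ℝ) * infDist y K' := by rw [hyy']
      _ ≤ (s : ℝ) * D := by
          gcongr
          exact hmax hyK
  have hD0 : D ≤ 0 := by
    have hs1 : (s : ℝ) < 1 := by exact_mod_cast hs
    nlinarith [infDist_nonneg (x := x0) (s := K')]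
  intro x hxK
  have : infDist x K' ≤ 0 := le_trans (hmax hxK) hD0
  have h0 : infDist x K' = 0 := le_antisymm this infDist_nonneg
  have : x ∈ closure K' := (mem_closure_iff_infDist_zero hK'ne).2 h0
  rwa [hK'c.isClosed.closure_eq] at this

/-- The double sequence of partial attractors `A m n` converges,
in the Hausdorff metric and along `atTop × atTop`, to
`A = closure (⋃ m ≥ 1, ⋃ n ≥ 1, A m n)`, the attractor of the countable IFS. -/
theorem partial_attractors_tendsto_attractor
    {X : Type*} [MetricSpace X] [CompactSpace X]
    (ω : ℕ → ℕ → X → X) (r : ℕ → ℕ → NNReal) (s : NNReal) (hs : s < 1)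
    (hrs : ∀ i j, r i j ≤ s) (hω : ∀ i j, LipschitzWith (r i j) (ω i j))
    (A : ℕ → ℕ → Set X)
    (hne : ∀ m ≥ 1, ∀ n ≥ 1, (A m n).Nonempty)
    (hcpt : ∀ m ≥ 1, ∀ n ≥ 1, IsCompact (A m n))
    (hA : ∀ m ≥ 1, ∀ n ≥ 1,
      A m n = ⋃ i ∈ Finset.Icc 1 m, ⋃ j ∈ Finset.Icc 1 n, ω i j '' (A m n)) :
    Tendsto (fun p : ℕ × ℕ =>
        hausdorffDist (A p.1 p.2) (closure (⋃ m ∈ Ici 1, ⋃ n ∈ Ici 1, A m n)))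
      atTop (nhds 0) := by
  set U : Set X := ⋃ m ∈ Ici 1, ⋃ n ∈ Ici 1, A m n with hU
  have hmono : ∀ m n m' n', 1 ≤ m → m ≤ m' → 1 ≤ n → n ≤ n' → A m n ⊆ A m' n' := by
    intro m n m' n' h1m hmm' h1n hnn'
    exact my_subset_of_invariant ω r s hs hrs hω (A m n) (A m' n')
      (hne m h1m n h1n) (hne m' (h1m.trans hmm') n' (h1n.trans hnn'))
      (hcpt m h1m n h1n) (hcpt m' (h1m.trans hmm') n' (h1n.trans hnn'))
      m n m' n' hmm' hnn' (hA m h1m n h1n) (hA m' (h1m.trans hmm') n' (h1n.trans hnn'))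
  have hsubU : ∀ m n, 1 ≤ m → 1 ≤ n → A m n ⊆ U := by
    intro m n h1m h1n x hx
    exact mem_iUnion₂.2 ⟨m, h1m, mem_iUnion₂.2 ⟨n, h1n, hx⟩⟩
  have hAclc : IsCompact (closure U) := isClosed_closure.isCompact
  rw [Metric.tendsto_nhds]
  intro ε hε
  -- cover closure U by balls of radius ε/2 centered in U
  have hcover : closure U ⊆ ⋃ u ∈ U, ball u (ε / 2) := by
    intro x hx
    obtain ⟨u, huU, hu⟩ := Metric.mem_closure_iff.1 hx (ε / 2) (by linarith)
    exact mem_iUnion₂.2 ⟨u, huU, mem_ball.2 hu⟩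
  obtain ⟨t, htU, htfin, htcover⟩ :=
    hAclc.elim_finite_subcover_image (fun u _ => isOpen_ball) hcover
  have h1 : ∀ u ∈ t, ∃ k, 1 ≤ k ∧ u ∈ A k k := by
    intro u hu
    have := htU hu
    simp only [hU, mem_iUnion] at this
    obtain ⟨m, h1m, n, h1n, hmem⟩ := this
    exact ⟨max m n, le_trans h1m (le_max_left _ _),
      hmono m n (max m n) (max m n) h1m (le_max_left _ _) h1n (le_max_right _ _) hmem⟩
  choose! f hf1 hf2 using h1
  set K : ℕ := max 1 (htfin.toFinset.sup f) with hK
  have hK1 : 1 ≤ K := le_max_left _ _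
  have hfK : ∀ u ∈ t, u ∈ A K K := by
    intro u hu
    have hfu : f u ≤ K := le_trans (Finset.le_sup (htfin.mem_toFinset.2 hu)) (le_max_right _ _)
    exact hmono (f u) (f u) K K (hf1 u hu) hfu (hf1 u hu) hfu (hf2 u hu)
  refine eventually_atTop.2 ⟨(K, K), ?_⟩
  rintro ⟨m, n⟩ hp
  obtain ⟨hmK, hnK⟩ : K ≤ m ∧ K ≤ n := hp
  have h1m : 1 ≤ m := hK1.trans hmK
  have h1n : 1 ≤ n := hK1.trans hnK
  have hdle : hausdorffDist (A m n) (closure U) ≤ ε / 2 := by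
    apply hausdorffDist_le_of_infDist (by linarith)
    · intro x hx
      have : x ∈ closure U := subset_closure (hsubU m n h1m h1n hx)
      rw [infDist_zero_of_mem this]
      linarith
    · intro x hx
      obtain ⟨u, hut, hxu⟩ := mem_iUnion₂.1 (htcover hx)
      have huA : u ∈ A m n := hmono K K m n hK1 hmK hK1 hnK (hfK u hut)
      calc infDist x (A m n) ≤ dist x u := infDist_le_dist_of_mem huA
        _ ≤ ε / 2 := le_of_lt (mem_ball.1 hxu)
  have : dist (hausdorffDist (A m n) (closure U)) 0 =
      hausdorffDist (A m n) (closure U) := by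
    rw [Real.dist_eq, sub_zero, abs_of_nonneg hausdorffDist_nonneg]
  rw [this]
  linarith
end

section
/- Let (h_n)_{n∈ℕ} be a sequence of continuous functions on I×J with h_n → f uniformly, and for each n let g_n be a continuous function satisfying the self-referential equation with data (f, h_n) (with the same α_{ij}, u_i, v_j for every n). Then g_n → f uniformly on I×J. -/
open Set Filter

lemma selfref_cover_aux (a b : ℝ) (x : ℕ → ℝ) (hx0 : x 0 = a)
    (hxb : Tendsto x atTop (nhds b)) {t : ℝ} (ht : t ∈ Ico a b) :
    ∃ i ≥ 1, t ∈ Icc (x (i - 1)) (x i) := by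
  classical
  have hev : ∀ᶠ i in atTop, t < x i := hxb.eventually (eventually_gt_nhds ht.2)
  have hP : ∃ i, t < x i := hev.exists
  set i := Nat.find hP with hi_def
  have hi : t < x i := Nat.find_spec hP
  have hi1 : 1 ≤ i := by
    rcases Nat.eq_zero_or_pos i with h0 | h0
    · exfalso
      rw [h0, hx0] at hi
      exact absurd hi (not_lt.2 ht.1)
    · exact h0
  have hprev : ¬ t < x (i - 1) := Nat.find_min hP (by omega)
  exact ⟨i, hi1, le_of_not_gt hprev, hi.le⟩

/-- If `hₙ → f` uniformly on `I × J` and, for each `n`, `gₙ`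
satisfies the self-referential equation with data `(f, hₙ)` (with the same
`αᵢⱼ`, `uᵢ`, `vⱼ`), then `gₙ → f` uniformly on `I × J`. -/
theorem selfref_tendstoUniformly_of_param_tendsto
    (a b c d : ℝ) (hab : a < b) (hcd : c < d)
    (x y : ℕ → ℝ)
    (hxmono : StrictMono x) (hx0 : x 0 = a) (hxb : Tendsto x atTop (nhds b))
    (hymono : StrictMono y) (hy0 : y 0 = c) (hyd : Tendsto y atTop (nhds d))
    (u v : ℕ → ℝ → ℝ) (uInv vInv : ℕ → ℝ → ℝ)
    (hubij : ∀ i ≥ 1, BijOn (u i) (Icc a b) (Icc (x (i - 1)) (x i)))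
    (hucont : ∀ i ≥ 1, ContinuousOn (u i) (Icc a b))
    (huInv : ∀ i ≥ 1, InvOn (uInv i) (u i) (Icc a b) (Icc (x (i - 1)) (x i)))
    (hvbij : ∀ j ≥ 1, BijOn (v j) (Icc c d) (Icc (y (j - 1)) (y j)))
    (hvcont : ∀ j ≥ 1, ContinuousOn (v j) (Icc c d))
    (hvInv : ∀ j ≥ 1, InvOn (vInv j) (v j) (Icc c d) (Icc (y (j - 1)) (y j)))
    (α : ℕ → ℕ → ℝ × ℝ → ℝ)
    (hαcont : ∀ i ≥ 1, ∀ j ≥ 1, ContinuousOn (α i j) ((Icc a b) ×ˢ (Icc c d)))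
    (s : ℝ) (hs : s < 1)
    (hαb : ∀ i ≥ 1, ∀ j ≥ 1, ∀ p ∈ (Icc a b) ×ˢ (Icc c d), |α i j p| ≤ s)
    (f : ℝ × ℝ → ℝ) (hf : ContinuousOn f ((Icc a b) ×ˢ (Icc c d)))
    (h g : ℕ → ℝ × ℝ → ℝ)
    (hh : ∀ n, ContinuousOn (h n) ((Icc a b) ×ˢ (Icc c d)))
    (hg : ∀ n, ContinuousOn (g n) ((Icc a b) ×ˢ (Icc c d)))
    (hself : ∀ n, ∀ i ≥ 1, ∀ j ≥ 1, ∀ p : ℝ × ℝ,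
      p.1 ∈ Icc (x (i - 1)) (x i) → p.2 ∈ Icc (y (j - 1)) (y j) →
      g n p = f p + α i j p *
        (g n (uInv i p.1, vInv j p.2) - h n (uInv i p.1, vInv j p.2)))
    (hconv : TendstoUniformlyOn h f atTop ((Icc a b) ×ˢ (Icc c d))) :
    TendstoUniformlyOn g f atTop ((Icc a b) ×ˢ (Icc c d)) := by
  classical
  set K : Set (ℝ × ℝ) := (Icc a b) ×ˢ (Icc c d) with hKdef
  have hKne : ((a, c) : ℝ × ℝ) ∈ K := ⟨⟨le_refl a, hab.le⟩, ⟨le_refl c, hcd.le⟩⟩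
  have hKcpt : IsCompact K := isCompact_Icc.prod isCompact_Icc
  have hs0 : 0 ≤ s := le_trans (abs_nonneg _) (hαb 1 le_rfl 1 le_rfl (a, c) hKne)
  have h1s : 0 < 1 - s := by linarith
  -- the dense subset where the self-referential equation is available
  set D : Set (ℝ × ℝ) := (Ico a b) ×ˢ (Ico c d) with hDdef
  have hDsubK : D ⊆ K := prod_mono Ico_subset_Icc_self Ico_subset_Icc_self
  have hDK : K ⊆ closure D := by
    have : closure D = K := by
      rw [hDdef, closure_prod_eq, closure_Ico hab.ne, closure_Ico hcd.ne]
    exact this.symm.subset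
  rw [Metric.tendstoUniformlyOn_iff] at hconv ⊢
  intro ε hε
  set δ : ℝ := ε * (1 - s) / 2 with hδdef
  have hδpos : 0 < δ := by positivity
  filter_upwards [hconv δ hδpos] with n hn
  -- the error function
  set φ : ℝ × ℝ → ℝ := fun p => |g n p - f p| with hφdef
  have hφcont : ContinuousOn φ K := ((hg n).sub hf).abs
  obtain ⟨p₀, hp₀K, hmax⟩ := hKcpt.exists_isMaxOn ⟨_, hKne⟩ hφcont
  set M : ℝ := φ p₀ with hMdef
  -- bound on the dense set
  have hD : ∀ q ∈ D, φ q ≤ s * (M + δ) := by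
    intro q hq
    obtain ⟨i, hi1, hqi⟩ := selfref_cover_aux a b x hx0 hxb hq.1
    obtain ⟨j, hj1, hqj⟩ := selfref_cover_aux c d y hy0 hyd hq.2
    have hqK : q ∈ K := hDsubK hq
    have h1 : uInv i q.1 ∈ Icc a b := by
      obtain ⟨t, ht, hut⟩ := (hubij i hi1).surjOn hqi
      rw [← hut, (huInv i hi1).1 ht]
      exact ht
    have h2 : vInv j q.2 ∈ Icc c d := by
      obtain ⟨t, ht, hvt⟩ := (hvbij j hj1).surjOn hqj
      rw [← hvt, (hvInv j hj1).1 ht]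
      exact ht
    set r : ℝ × ℝ := (uInv i q.1, vInv j q.2) with hrdef
    have hrK : r ∈ K := ⟨h1, h2⟩
    have heq : g n q - f q = α i j q * (g n r - h n r) := by
      rw [hself n i hi1 j hj1 q hqi hqj]; ring
    have hα : |α i j q| ≤ s := hαb i hi1 j hj1 q hqK
    have hbound : |g n r - h n r| ≤ M + δ := by
      have h3 : |g n r - f r| ≤ M := hmax hrK
      have h4 : |f r - h n r| ≤ δ := by
        have := hn r hrK
        rw [Real.dist_eq] at this
        exact this.le
      calc |g n r - h n r| = |(g n r - f r) + (f r - h n r)| := by ring_nf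
        _ ≤ |g n r - f r| + |f r - h n r| := abs_add_le _ _
        _ ≤ M + δ := add_le_add h3 h4
    calc φ q = |α i j q| * |g n r - h n r| := by rw [hφdef]; simp only []; rw [heq, abs_mul]
      _ ≤ s * (M + δ) := mul_le_mul hα hbound (abs_nonneg _) hs0
  -- extend the bound to all of K by continuity
  have hMK : ∀ p ∈ K, φ p ≤ s * (M + δ) := by
    intro p hpK
    have hne : (nhdsWithin p D).NeBot := mem_closure_iff_nhdsWithin_neBot.1 (hDK hpK)
    have htends : Tendsto φ (nhdsWithin p D) (nhds (φ p)) :=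
      (hφcont p hpK).mono hDsubK
    exact le_of_tendsto htends (eventually_nhdsWithin_of_forall hD)
  have hM : M ≤ s * (M + δ) := hMK p₀ hp₀K
  have hMε : M < ε := by nlinarith [mul_pos hε h1s, mul_nonneg hs0 hε.le]
  intro p hp
  rw [Real.dist_eq]
  calc |f p - g n p| = φ p := abs_sub_comm _ _
    _ ≤ M := hmax hp
    _ < ε := hMε
end

section
/- If g₁ satisfies the self-referential equation with data (f₁, h₁) and g₂ satisfies it with data (f₂, h₂) (with the same α_{ij}, u_i, v_j), then ‖g₁ − g₂‖_∞ ≤ (1/(1 − s)) · ‖f₁ − f₂‖_∞ + (s/(1 − s)) · ‖h₁ − h₂‖_∞. In particular, the α-fractal operator F^α_{Δ,L} is relatively Lipschitz with respect to L with L-Lipschitz constant at most s/(1−s), and it is continuous whenever L is continuous. -/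
open Set Filter

/-- The sup norm of `φ` over the set `S`. -/
noncomputable def supOn (S : Set (ℝ × ℝ)) (φ : ℝ × ℝ → ℝ) : ℝ :=
  ⨆ p : S, |φ (p : ℝ × ℝ)|

/-- If `g₁` satisfies the self-referential equation with data
`(f₁, h₁)` and `g₂` with data `(f₂, h₂)` (same `αᵢⱼ`, `uᵢ`, `vⱼ`), then
`‖g₁ − g₂‖_∞ ≤ (1/(1 − s))‖f₁ − f₂‖_∞ + (s/(1 − s))‖h₁ − h₂‖_∞`; i.e. the
α-fractal operator is relatively Lipschitz with respect to the parameter map. -/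
theorem selfref_relatively_lipschitz
    (a b c d : ℝ) (hab : a < b) (hcd : c < d)
    (x y : ℕ → ℝ)
    (hxmono : StrictMono x) (hx0 : x 0 = a) (hxb : Tendsto x atTop (nhds b))
    (hymono : StrictMono y) (hy0 : y 0 = c) (hyd : Tendsto y atTop (nhds d))
    (u v : ℕ → ℝ → ℝ) (uInv vInv : ℕ → ℝ → ℝ)
    (hubij : ∀ i ≥ 1, BijOn (u i) (Icc a b) (Icc (x (i - 1)) (x i)))
    (hucont : ∀ i ≥ 1, ContinuousOn (u i) (Icc a b))
    (huInv : ∀ i ≥ 1, InvOn (uInv i) (u i) (Icc a b) (Icc (x (i - 1)) (x i)))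
    (hvbij : ∀ j ≥ 1, BijOn (v j) (Icc c d) (Icc (y (j - 1)) (y j)))
    (hvcont : ∀ j ≥ 1, ContinuousOn (v j) (Icc c d))
    (hvInv : ∀ j ≥ 1, InvOn (vInv j) (v j) (Icc c d) (Icc (y (j - 1)) (y j)))
    (α : ℕ → ℕ → ℝ × ℝ → ℝ)
    (hαcont : ∀ i ≥ 1, ∀ j ≥ 1, ContinuousOn (α i j) ((Icc a b) ×ˢ (Icc c d)))
    (s : ℝ) (hs : s < 1)
    (hαb : ∀ i ≥ 1, ∀ j ≥ 1, ∀ p ∈ (Icc a b) ×ˢ (Icc c d), |α i j p| ≤ s)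
    (f₁ f₂ h₁ h₂ g₁ g₂ : ℝ × ℝ → ℝ)
    (hf₁ : ContinuousOn f₁ ((Icc a b) ×ˢ (Icc c d)))
    (hf₂ : ContinuousOn f₂ ((Icc a b) ×ˢ (Icc c d)))
    (hh₁ : ContinuousOn h₁ ((Icc a b) ×ˢ (Icc c d)))
    (hh₂ : ContinuousOn h₂ ((Icc a b) ×ˢ (Icc c d)))
    (hg₁ : ContinuousOn g₁ ((Icc a b) ×ˢ (Icc c d)))
    (hg₂ : ContinuousOn g₂ ((Icc a b) ×ˢ (Icc c d)))
    (hself₁ : ∀ i ≥ 1, ∀ j ≥ 1, ∀ p : ℝ × ℝ,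
      p.1 ∈ Icc (x (i - 1)) (x i) → p.2 ∈ Icc (y (j - 1)) (y j) →
      g₁ p = f₁ p + α i j p *
        (g₁ (uInv i p.1, vInv j p.2) - h₁ (uInv i p.1, vInv j p.2)))
    (hself₂ : ∀ i ≥ 1, ∀ j ≥ 1, ∀ p : ℝ × ℝ,
      p.1 ∈ Icc (x (i - 1)) (x i) → p.2 ∈ Icc (y (j - 1)) (y j) →
      g₂ p = f₂ p + α i j p *
        (g₂ (uInv i p.1, vInv j p.2) - h₂ (uInv i p.1, vInv j p.2))) :
    supOn ((Icc a b) ×ˢ (Icc c d)) (fun p => g₁ p - g₂ p) ≤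
      (1 / (1 - s)) * supOn ((Icc a b) ×ˢ (Icc c d)) (fun p => f₁ p - f₂ p) +
      (s / (1 - s)) * supOn ((Icc a b) ×ˢ (Icc c d)) (fun p => h₁ p - h₂ p) := by

  classical
  set D : Set (ℝ × ℝ) := (Icc a b) ×ˢ (Icc c d) with hD
  have hp0 : ((a, c) : ℝ × ℝ) ∈ D := by
    constructor <;> simp [hab.le, hcd.le]
  have hs0 : (0 : ℝ) ≤ s := (abs_nonneg _).trans (hαb 1 le_rfl 1 le_rfl (a, c) hp0)
  have h1s : (0 : ℝ) < 1 - s := by linarith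
  have hDcomp : IsCompact D := isCompact_Icc.prod isCompact_Icc
  -- boundedness of sup ranges
  have bdd : ∀ φ : ℝ × ℝ → ℝ, ContinuousOn φ D →
      BddAbove (Set.range fun p : D => |φ (p : ℝ × ℝ)|) := by
    intro φ hφ
    obtain ⟨C, hC⟩ := hDcomp.exists_bound_of_continuousOn hφ
    refine ⟨C, ?_⟩
    rintro _ ⟨p, rfl⟩
    simpa [Real.norm_eq_abs] using hC p p.2
  have le_supOn : ∀ φ : ℝ × ℝ → ℝ, ContinuousOn φ D → ∀ p ∈ D,
      |φ p| ≤ supOn D φ := by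
    intro φ hφ p hp
    exact le_ciSup (bdd φ hφ) ⟨p, hp⟩
  have supOn_le : ∀ φ : ℝ × ℝ → ℝ, ∀ M : ℝ, (∀ p ∈ D, |φ p| ≤ M) →
      supOn D φ ≤ M := by
    intro φ M hM
    have : Nonempty D := ⟨⟨(a, c), hp0⟩⟩
    exact ciSup_le fun p => hM p p.2
  set F := supOn D (fun p => f₁ p - f₂ p) with hF
  set H := supOn D (fun p => h₁ p - h₂ p) with hH
  set G := supOn D (fun p => g₁ p - g₂ p) with hG
  have hfc : ContinuousOn (fun p => f₁ p - f₂ p) D := hf₁.sub hf₂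
  have hhc : ContinuousOn (fun p => h₁ p - h₂ p) D := hh₁.sub hh₂
  have hgc : ContinuousOn (fun p => g₁ p - g₂ p) D := hg₁.sub hg₂
  have hGH0 : 0 ≤ G + H := by
    have h1 : (0:ℝ) ≤ G := (abs_nonneg _).trans (le_supOn _ hgc (a,c) hp0)
    have h2 : (0:ℝ) ≤ H := (abs_nonneg _).trans (le_supOn _ hhc (a,c) hp0)
    linarith
  -- covering lemmas
  have cover : ∀ (z : ℕ → ℝ) (e w : ℝ), StrictMono z → z 0 = e →
      Tendsto z atTop (nhds w) → ∀ t, e ≤ t → t < w →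
      ∃ i, 1 ≤ i ∧ z (i - 1) ≤ t ∧ t ≤ z i := by
    intro z e w hzm hz0 hzw t het htw
    obtain ⟨n, hn⟩ := (hzw.eventually (eventually_gt_nhds htw)).exists
    have hP : ∃ m, t ≤ z m := ⟨n, hn.le⟩
    rcases Nat.eq_zero_or_pos (Nat.find hP) with h0 | hpos
    · refine ⟨1, le_rfl, ?_, ?_⟩
      · simpa [hz0] using het
      · have ht0 : t ≤ z 0 := by
          have := Nat.find_spec hP; rwa [h0] at this
        exact ht0.trans (hzm zero_lt_one).le
    · refine ⟨Nat.find hP, hpos, ?_, Nat.find_spec hP⟩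
      have := Nat.find_min hP (Nat.sub_lt hpos one_pos)
      exact (not_le.mp this).le
  -- inverse maps land in the base intervals
  have huMem : ∀ i, 1 ≤ i → ∀ t ∈ Icc (x (i-1)) (x i), uInv i t ∈ Icc a b := by
    intro i hi t ht
    obtain ⟨z, hz, hzt⟩ := (hubij i hi).surjOn ht
    have : uInv i t = z := by rw [← hzt]; exact (huInv i hi).1 hz
    rw [this]; exact hz
  have hvMem : ∀ j, 1 ≤ j → ∀ t ∈ Icc (y (j-1)) (y j), vInv j t ∈ Icc c d := by
    intro j hj t ht
    obtain ⟨z, hz, hzt⟩ := (hvbij j hj).surjOn ht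
    have : vInv j t = z := by rw [← hzt]; exact (hvInv j hj).1 hz
    rw [this]; exact hz
  -- pointwise bound on interior-ish points
  have hD'B : ∀ p ∈ D, p.1 < b → p.2 < d →
      |g₁ p - g₂ p| ≤ F + s * (G + H) := by
    intro p hp h1 h2
    obtain ⟨i, hi, hxi1, hxi2⟩ := cover x a b hxmono hx0 hxb p.1 hp.1.1 h1
    obtain ⟨j, hj, hyj1, hyj2⟩ := cover y c d hymono hy0 hyd p.2 hp.2.1 h2
    set q : ℝ × ℝ := (uInv i p.1, vInv j p.2) with hq
    have hqD : q ∈ D :=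
      ⟨huMem i hi p.1 ⟨hxi1, hxi2⟩, hvMem j hj p.2 ⟨hyj1, hyj2⟩⟩
    have e1 := hself₁ i hi j hj p ⟨hxi1, hxi2⟩ ⟨hyj1, hyj2⟩
    have e2 := hself₂ i hi j hj p ⟨hxi1, hxi2⟩ ⟨hyj1, hyj2⟩
    have key : g₁ p - g₂ p =
        (f₁ p - f₂ p) + α i j p * ((g₁ q - g₂ q) - (h₁ q - h₂ q)) := by
      rw [e1, e2]; ring
    rw [key]
    have t1 : |(f₁ p - f₂ p) + α i j p * ((g₁ q - g₂ q) - (h₁ q - h₂ q))| ≤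
        |f₁ p - f₂ p| + |α i j p| * |(g₁ q - g₂ q) - (h₁ q - h₂ q)| := by
      refine (abs_add_le _ _).trans ?_
      rw [abs_mul]
    refine t1.trans (add_le_add (le_supOn _ hfc p hp) ?_)
    have t2 : |(g₁ q - g₂ q) - (h₁ q - h₂ q)| ≤ G + H := by
      refine (abs_sub _ _).trans ?_
      exact add_le_add (le_supOn _ hgc q hqD) (le_supOn _ hhc q hqD)
    exact mul_le_mul (hαb i hi j hj p hp) t2 (abs_nonneg _) hs0
  -- extend to all of D by continuity
  have hbound : ∀ p ∈ D, |g₁ p - g₂ p| ≤ F + s * (G + H) := by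
    intro p hp
    have ht0 : Tendsto (fun n : ℕ => (1:ℝ)/(n+1)) atTop (nhds 0) :=
      tendsto_one_div_add_atTop_nhds_zero_nat
    set q : ℕ → ℝ × ℝ := fun n =>
      ((1/(n+1:ℝ)) * a + (1 - 1/(n+1:ℝ)) * p.1,
       (1/(n+1:ℝ)) * c + (1 - 1/(n+1:ℝ)) * p.2) with hqdef
    have hqD : ∀ n, q n ∈ D ∧ (q n).1 < b ∧ (q n).2 < d := by
      intro n
      have htpos : 0 < (1:ℝ)/(n+1) := by positivity
      have htle : (1:ℝ)/(n+1) ≤ 1 := by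
        rw [div_le_one (by positivity)]; linarith
      obtain ⟨⟨ha1, hb1⟩, hc1, hd1⟩ := hp
      refine ⟨⟨⟨?_, ?_⟩, ?_, ?_⟩, ?_, ?_⟩ <;> simp only [hqdef] <;> nlinarith
    have hone : Tendsto (fun n : ℕ => (1:ℝ) - 1/(n+1:ℝ)) atTop (nhds 1) := by
      have : Tendsto (fun _ : ℕ => (1:ℝ)) atTop (nhds 1) := tendsto_const_nhds
      simpa using this.sub ht0
    have l1 : Tendsto (fun n : ℕ => (1/(n+1:ℝ)) * a + (1 - 1/(n+1:ℝ)) * p.1)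
        atTop (nhds p.1) := by
      have := (ht0.mul_const a).add (hone.mul_const p.1)
      simpa using this
    have l2 : Tendsto (fun n : ℕ => (1/(n+1:ℝ)) * c + (1 - 1/(n+1:ℝ)) * p.2)
        atTop (nhds p.2) := by
      have := (ht0.mul_const c).add (hone.mul_const p.2)
      simpa using this
    have hqp : Tendsto q atTop (nhds p) := by
      rw [← Prod.mk.eta (p := p)]
      exact l1.prodMk_nhds l2
    have hqDW : Tendsto q atTop (nhdsWithin p D) :=
      tendsto_nhdsWithin_iff.mpr ⟨hqp, Filter.Eventually.of_forall fun n => (hqD n).1⟩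
    have hcont : ContinuousWithinAt (fun r => |g₁ r - g₂ r|) D p := hgc.abs p hp
    have hlim : Tendsto (fun n => |g₁ (q n) - g₂ (q n)|) atTop
        (nhds (|g₁ p - g₂ p|)) := hcont.tendsto.comp hqDW
    exact le_of_tendsto hlim (Filter.Eventually.of_forall fun n =>
      hD'B (q n) (hqD n).1 (hqD n).2.1 (hqD n).2.2)
  have hGle : G ≤ F + s * (G + H) := supOn_le _ _ hbound
  have hfinal : G ≤ (F + s * H) / (1 - s) := by
    rw [le_div_iff₀ h1s]; nlinarith
  calc G ≤ (F + s * H) / (1 - s) := hfinal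
    _ = (1 / (1 - s)) * F + (s / (1 - s)) * H := by ring
end

section
/- If the continuous function g satisfies the self-referential equation with data (f, h), then ‖g‖_∞ ≤ (1/(1 − s)) · ‖f‖_∞ + (s/(1 − s)) · ‖h‖_∞. In particular, the α-fractal operator F^α_{Δ,L} is relatively norm-bounded with respect to L, with L-bound not exceeding s/(1−s). -/
open Set Filter

/-- If the continuous function `g` satisfies the
self-referential equation with data `(f, h)`, then
`‖g‖_∞ ≤ (1/(1 − s))‖f‖_∞ + (s/(1 − s))‖h‖_∞`; i.e. the α-fractal operator is
relatively norm-bounded with respect to the parameter map, with `L`-bound at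
most `s/(1 − s)`. -/
theorem selfref_relatively_bounded
    (a b c d : ℝ) (hab : a < b) (hcd : c < d)
    (x y : ℕ → ℝ)
    (hxmono : StrictMono x) (hx0 : x 0 = a) (hxb : Tendsto x atTop (nhds b))
    (hymono : StrictMono y) (hy0 : y 0 = c) (hyd : Tendsto y atTop (nhds d))
    (u v : ℕ → ℝ → ℝ) (uInv vInv : ℕ → ℝ → ℝ)
    (hubij : ∀ i ≥ 1, BijOn (u i) (Icc a b) (Icc (x (i - 1)) (x i)))
    (hucont : ∀ i ≥ 1, ContinuousOn (u i) (Icc a b))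
    (huInv : ∀ i ≥ 1, InvOn (uInv i) (u i) (Icc a b) (Icc (x (i - 1)) (x i)))
    (hvbij : ∀ j ≥ 1, BijOn (v j) (Icc c d) (Icc (y (j - 1)) (y j)))
    (hvcont : ∀ j ≥ 1, ContinuousOn (v j) (Icc c d))
    (hvInv : ∀ j ≥ 1, InvOn (vInv j) (v j) (Icc c d) (Icc (y (j - 1)) (y j)))
    (α : ℕ → ℕ → ℝ × ℝ → ℝ)
    (hαcont : ∀ i ≥ 1, ∀ j ≥ 1, ContinuousOn (α i j) ((Icc a b) ×ˢ (Icc c d)))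
    (s : ℝ) (hs : s < 1)
    (hαb : ∀ i ≥ 1, ∀ j ≥ 1, ∀ p ∈ (Icc a b) ×ˢ (Icc c d), |α i j p| ≤ s)
    (f h g : ℝ × ℝ → ℝ)
    (hf : ContinuousOn f ((Icc a b) ×ˢ (Icc c d)))
    (hh : ContinuousOn h ((Icc a b) ×ˢ (Icc c d)))
    (hg : ContinuousOn g ((Icc a b) ×ˢ (Icc c d)))
    (hself : ∀ i ≥ 1, ∀ j ≥ 1, ∀ p : ℝ × ℝ,
      p.1 ∈ Icc (x (i - 1)) (x i) → p.2 ∈ Icc (y (j - 1)) (y j) →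
      g p = f p + α i j p *
        (g (uInv i p.1, vInv j p.2) - h (uInv i p.1, vInv j p.2))) :
    supOn ((Icc a b) ×ˢ (Icc c d)) g ≤
      (1 / (1 - s)) * supOn ((Icc a b) ×ˢ (Icc c d)) f +
      (s / (1 - s)) * supOn ((Icc a b) ×ˢ (Icc c d)) h := by
  classical
  set Q : Set (ℝ × ℝ) := (Icc a b) ×ˢ (Icc c d) with hQdef
  have hQc : IsCompact Q := (isCompact_Icc).prod isCompact_Icc
  have hp₀ : ((a, c) : ℝ × ℝ) ∈ Q := ⟨⟨le_refl _, hab.le⟩, ⟨le_refl _, hcd.le⟩⟩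
  haveI : Nonempty Q := ⟨⟨_, hp₀⟩⟩
  have hs0 : 0 ≤ s := (abs_nonneg _).trans (hαb 1 le_rfl 1 le_rfl _ hp₀)
  have h1s : 0 < 1 - s := by linarith
  have bdd : ∀ φ : ℝ × ℝ → ℝ, ContinuousOn φ Q →
      BddAbove (Set.range fun p : Q => |φ (p : ℝ × ℝ)|) := by
    intro φ hφ
    obtain ⟨C, hC⟩ := hQc.exists_bound_of_continuousOn hφ
    exact ⟨C, by rintro _ ⟨p, rfl⟩; simpa [Real.norm_eq_abs] using hC p p.2⟩
  have le_sup : ∀ φ : ℝ × ℝ → ℝ, ContinuousOn φ Q → ∀ p ∈ Q, |φ p| ≤ supOn Q φ := by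
    intro φ hφ p hp
    exact le_ciSup (bdd φ hφ) ⟨p, hp⟩
  have sup_le : ∀ (φ : ℝ × ℝ → ℝ) (C : ℝ), (∀ p ∈ Q, |φ p| ≤ C) → supOn Q φ ≤ C := by
    intro φ C hC
    exact ciSup_le fun p => hC p p.2
  -- covering lemma
  have cover : ∀ (z : ℕ → ℝ) (e e' : ℝ), StrictMono z → z 0 = e →
      Tendsto z atTop (nhds e') →
      ∀ t, e ≤ t → t < e' → ∃ i, 1 ≤ i ∧ z (i - 1) ≤ t ∧ t ≤ z i := by
    intro z e e' hz hz0 hze t hte hte'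
    have hex : ∃ n, t ≤ z n := by
      obtain ⟨n, hn⟩ := (hze.eventually (eventually_gt_nhds hte')).exists
      exact ⟨n, hn.le⟩
    set i := Nat.find hex with hi
    have hti : t ≤ z i := Nat.find_spec hex
    rcases Nat.eq_zero_or_pos i with h0 | hpos
    · refine ⟨1, le_rfl, ?_, ?_⟩
      · simpa [hz0] using hte
      · have h1 : t ≤ z 0 := by rw [← h0]; exact hti
        exact h1.trans (hz (Nat.zero_lt_one)).le
    · refine ⟨i, hpos, ?_, hti⟩
      have hmin := Nat.find_min hex (m := i - 1) (by omega)
      exact (not_le.mp hmin).le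
  -- inverse maps land in the base intervals
  have uInv_mem : ∀ i, 1 ≤ i → ∀ t ∈ Icc (x (i - 1)) (x i), uInv i t ∈ Icc a b := by
    intro i hi t ht
    obtain ⟨w, hw, rfl⟩ := (hubij i hi).surjOn ht
    rw [(huInv i hi).1 hw]; exact hw
  have vInv_mem : ∀ j, 1 ≤ j → ∀ t ∈ Icc (y (j - 1)) (y j), vInv j t ∈ Icc c d := by
    intro j hj t ht
    obtain ⟨w, hw, rfl⟩ := (hvbij j hj).surjOn ht
    rw [(hvInv j hj).1 hw]; exact hw
  set D : Set (ℝ × ℝ) := (Ico a b) ×ˢ (Ico c d) with hDdef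
  set F := supOn Q f
  set H := supOn Q h
  set G := supOn Q g
  -- bound on the dense set D
  have hD : ∀ p ∈ D, |g p| ≤ F + s * (G + H) := by
    intro p hp
    obtain ⟨i, hi, hxi1, hxi2⟩ := cover x a b hxmono hx0 hxb p.1 hp.1.1 hp.1.2
    obtain ⟨j, hj, hyj1, hyj2⟩ := cover y c d hymono hy0 hyd p.2 hp.2.1 hp.2.2
    have hpQ : p ∈ Q := ⟨⟨hp.1.1, hp.1.2.le⟩, ⟨hp.2.1, hp.2.2.le⟩⟩
    set q : ℝ × ℝ := (uInv i p.1, vInv j p.2) with hq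
    have hqQ : q ∈ Q :=
      ⟨uInv_mem i hi p.1 ⟨hxi1, hxi2⟩, vInv_mem j hj p.2 ⟨hyj1, hyj2⟩⟩
    rw [hself i hi j hj p ⟨hxi1, hxi2⟩ ⟨hyj1, hyj2⟩]
    have h1 : |f p| ≤ F := le_sup f hf p hpQ
    have h2 : |g q| ≤ G := le_sup g hg q hqQ
    have h3 : |h q| ≤ H := le_sup h hh q hqQ
    have hα : |α i j p| ≤ s := hαb i hi j hj p hpQ
    have hsub : |g q - h q| ≤ G + H :=
      (abs_sub _ _).trans (add_le_add h2 h3)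
    calc |f p + α i j p * (g q - h q)|
        ≤ |f p| + |α i j p| * |g q - h q| := by
          rw [← abs_mul]; exact abs_add_le _ _
      _ ≤ F + s * (G + H) := by
          gcongr
  -- extend the bound to Q by continuity and density
  have hDcl : Q ⊆ closure D := by
    rw [hDdef, closure_prod_eq, closure_Ico hab.ne, closure_Ico hcd.ne]
  have hGQ : ∀ p ∈ Q, |g p| ≤ F + s * (G + H) := by
    intro p hp
    have hne : (nhdsWithin p D).NeBot := mem_closure_iff_nhdsWithin_neBot.mp (hDcl hp)
    have hcont : ContinuousWithinAt g D p :=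
      (hg p hp).mono (by
        rintro ⟨t₁, t₂⟩ ⟨ht1, ht2⟩
        exact ⟨⟨ht1.1, ht1.2.le⟩, ⟨ht2.1, ht2.2.le⟩⟩)
    have htend : Tendsto (fun q => |g q|) (nhdsWithin p D) (nhds |g p|) :=
      (continuous_abs.tendsto _).comp hcont
    exact le_of_tendsto htend (eventually_nhdsWithin_of_forall hD)
  have hG : G ≤ F + s * (G + H) := sup_le g _ hGQ
  have key : G * (1 - s) ≤ F + s * H := by nlinarith
  have : G ≤ (F + s * H) / (1 - s) := (le_div_iff₀ h1s).mpr key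
  have heq : (1 / (1 - s)) * F + (s / (1 - s)) * H = (F + s * H) / (1 - s) := by ring
  rw [heq]
  exact this
end

section
/- Suppose L maps Cauchy sequences (in the sup norm) to Cauchy sequences. Then F is not a closed operator; that is, there exists a sequence (f_n) in Lip(I×J) and functions f, k ∈ C(I×J) with f_n → f and F(f_n) → k in sup norm, such that f ∉ Lip(I×J) or F(f) ≠ k. -/
/-!
The function `√(x - a)` is continuous but not Lipschitz on the rectangle, and it is the
uniform limit of the Lipschitz functions `fₙ = √(x - a + 1/(n+1))`. The relative estimate bounds
`‖F fₘ - F fₙ‖∞` by a combination of `‖fₘ - fₙ‖∞` and `‖L fₘ - L fₙ‖∞`, which both tend to `0`,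
so `F fₙ` is uniformly Cauchy and converges uniformly to a continuous `k`, while the limit of
`fₙ` lies outside the domain `Lip(I×J)`.
-/

open Set Filter

open Topology

section SupNorm

variable {S : Set (ℝ × ℝ)}

lemma supOn_nonneg (g : ℝ × ℝ → ℝ) : 0 ≤ supOn S g :=
  Real.iSup_nonneg fun _ => abs_nonneg _

lemma supOn_le {g : ℝ × ℝ → ℝ} {C : ℝ} (hC : 0 ≤ C) (h : ∀ p ∈ S, |g p| ≤ C) :
    supOn S g ≤ C :=
  Real.iSup_le (fun p => h p p.2) hC

lemma abs_le_supOn (hS : IsCompact S) {g : ℝ × ℝ → ℝ} (hg : ContinuousOn g S)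
    {p : ℝ × ℝ} (hp : p ∈ S) : |g p| ≤ supOn S g := by
  have hbdd : BddAbove (range fun q : S => |g q|) := by
    simpa only [image_eq_range] using (hS.image_of_continuousOn hg.abs).bddAbove
  exact le_ciSup hbdd ⟨p, hp⟩

variable {ι : Type*} {l : Filter ι} {u : ι → ℝ × ℝ → ℝ}

lemma UniformCauchySeqOn.tendsto_supOn_sub (hu : UniformCauchySeqOn u l S) :
    Tendsto (fun mn : ι × ι => supOn S fun p => u mn.1 p - u mn.2 p) (l ×ˢ l) (𝓝 0) := by
  refine tendsto_order.2 ⟨fun ε hε => Eventually.of_forall fun _ => hε.trans_le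
    (supOn_nonneg _), fun ε hε => ?_⟩
  filter_upwards [hu _ (Metric.dist_mem_uniformity (half_pos hε))] with mn hmn
  refine (supOn_le (half_pos hε).le fun p hp => ?_).trans_lt (half_lt_self hε)
  simpa only [← Real.dist_eq] using (hmn p hp).le

lemma uniformCauchySeqOn_of_tendsto_supOn_sub (hS : IsCompact S)
    (hu : ∀ i, ContinuousOn (u i) S)
    (h : Tendsto (fun mn : ι × ι => supOn S fun p => u mn.1 p - u mn.2 p) (l ×ˢ l) (𝓝 0)) :
    UniformCauchySeqOn u l S := by
  intro U hU
  obtain ⟨ε, hε, hεU⟩ := Metric.mem_uniformity_dist.1 hU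
  filter_upwards [(tendsto_order.1 h).2 ε hε] with mn hmn p hp
  exact hεU ((abs_le_supOn hS ((hu mn.1).sub (hu mn.2)) hp).trans_lt hmn)

lemma UniformCauchySeqOn.of_supOn_sub_le (hS : IsCompact S) {v w : ι → ℝ × ℝ → ℝ}
    {A B : ℝ} (hw : ∀ i, ContinuousOn (w i) S)
    (hu : UniformCauchySeqOn u l S) (hv : UniformCauchySeqOn v l S)
    (hbound : ∀ i j, supOn S (fun p => w i p - w j p) ≤
      A * supOn S (fun p => u i p - u j p) + B * supOn S (fun p => v i p - v j p)) :
    UniformCauchySeqOn w l S := by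
  refine uniformCauchySeqOn_of_tendsto_supOn_sub hS hw (squeeze_zero (fun _ => supOn_nonneg _)
    (fun mn => hbound mn.1 mn.2) ?_)
  simpa using (hu.tendsto_supOn_sub.const_mul A).add (hv.tendsto_supOn_sub.const_mul B)

end SupNorm

lemma UniformCauchySeqOn.exists_tendstoUniformlyOn {ι α β : Type*} [UniformSpace β]
    [CompleteSpace β] {l : Filter ι} [l.NeBot] {F : ι → α → β} {s : Set α}
    (hF : UniformCauchySeqOn F l s) : ∃ f, TendstoUniformlyOn F f l s := by
  classical
  have hlim (x) (hx : x ∈ s) : ∃ y, Tendsto (fun i => F i x) l (𝓝 y) :=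
    CompleteSpace.complete (hF.cauchy_map hx)
  obtain ⟨i⟩ := l.nonempty_of_neBot
  refine ⟨fun x => if hx : x ∈ s then (hlim x hx).choose else F i x,
    hF.tendstoUniformlyOn_of_tendsto fun x hx => ?_⟩
  simpa only [hx, dite_true] using (hlim x hx).choose_spec

namespace Real

lemma abs_sqrt_sub_sqrt_le {ε x y : ℝ} (hε : 0 < ε) (hx : ε ≤ x) (hy : ε ≤ y) :
    |√x - √y| ≤ |x - y| / (2 * √ε) := by
  have hsum : 2 * √ε ≤ √x + √y := by linarith [sqrt_le_sqrt hx, sqrt_le_sqrt hy]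
  have hprod : x - y = (√x - √y) * (√x + √y) := by
    nlinarith [sq_sqrt (hε.le.trans hx), sq_sqrt (hε.le.trans hy)]
  rw [le_div_iff₀ (mul_pos two_pos (sqrt_pos.2 hε)), hprod, abs_mul,
    abs_of_nonneg (add_nonneg (sqrt_nonneg x) (sqrt_nonneg y))]
  gcongr

lemma lipschitzOnWith_sqrt_Ici {ε : ℝ} (hε : 0 < ε) :
    LipschitzOnWith (1 / (2 * √ε)).toNNReal sqrt (Ici ε) :=
  LipschitzOnWith.of_dist_le_mul fun x hx y hy => by
    rw [coe_toNNReal _ (by positivity), dist_eq, dist_eq, div_mul_eq_mul_div, one_mul]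
    exact abs_sqrt_sub_sqrt_le hε hx hy

lemma sqrt_add_le_add_sqrt {x y : ℝ} (hx : 0 ≤ x) (hy : 0 ≤ y) : √(x + y) ≤ √x + √y := by
  rw [sqrt_le_left (by positivity)]
  nlinarith [sq_sqrt hx, sq_sqrt hy, mul_nonneg (sqrt_nonneg x) (sqrt_nonneg y)]

lemma dist_sqrt_sqrt_add_le {x y : ℝ} (hx : 0 ≤ x) (hy : 0 ≤ y) : dist √x √(x + y) ≤ √y := by
  rw [dist_comm, dist_eq, abs_of_nonneg (sub_nonneg.2 (sqrt_le_sqrt (by linarith)))]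
  linarith [sqrt_add_le_add_sqrt hx hy]

lemma not_lipschitzOnWith_sqrt_Icc {r : ℝ} (hr : 0 < r) (K : NNReal) :
    ¬ LipschitzOnWith K sqrt (Icc 0 r) := by
  intro hK
  -- at `t` the difference quotient `√t / t = 1 / √t` of `√` at `0` exceeds `K`
  set t := min r ((1 / (K + 1)) ^ 2)
  have ht : 0 < t := lt_min hr (by positivity)
  have hst : 0 < √t := sqrt_pos.2 ht
  have hsmall : √t ≤ 1 / (K + 1) :=
    (sqrt_le_left (by positivity)).2 (min_le_right _ _)
  have hlip : √t ≤ K * (√t * √t) := by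
    simpa [dist_eq, abs_of_pos ht, abs_of_pos hst, mul_self_sqrt ht.le] using
      hK.dist_le_mul t ⟨ht.le, min_le_left _ _⟩ 0 ⟨le_rfl, hr.le⟩
  rw [le_div_iff₀ (by positivity)] at hsmall
  nlinarith

end Real

lemma exists_lipschitzOnWith_tendstoUniformlyOn_not_lipschitzOnWith {a b c d : ℝ}
    (hab : a < b) (hcd : c ≤ d) :
    ∃ (u : ℕ → ℝ × ℝ → ℝ) (f : ℝ × ℝ → ℝ),
      (∀ n, ∃ M : NNReal, LipschitzOnWith M (u n) (Icc a b ×ˢ Icc c d)) ∧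
      ContinuousOn f (Icc a b ×ˢ Icc c d) ∧
      TendstoUniformlyOn u f atTop (Icc a b ×ˢ Icc c d) ∧
      ¬ ∃ M : NNReal, LipschitzOnWith M f (Icc a b ×ˢ Icc c d) := by
  set S := Icc a b ×ˢ Icc c d
  have hshift (ε : ℝ) : LipschitzWith 1 fun p : ℝ × ℝ => p.1 - a + ε := by
    simpa using (LipschitzWith.prod_fst.sub (LipschitzWith.const a)).add (LipschitzWith.const ε)
  refine ⟨fun n p => √(p.1 - a + 1 / (n + 1)), fun p => √(p.1 - a), fun n => ?_,
    by fun_prop, ?_, ?_⟩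
  · have hε : (0 : ℝ) < 1 / (n + 1) := by positivity
    exact ⟨_, (Real.lipschitzOnWith_sqrt_Ici hε).comp (hshift _).lipschitzOnWith
      fun p hp => by simpa using hp.1.1⟩
  · have hlim : Tendsto (fun n : ℕ => √(1 / (n + 1))) atTop (𝓝 0) := by
      simpa using tendsto_one_div_add_atTop_nhds_zero_nat.sqrt
    rw [Metric.tendstoUniformlyOn_iff]
    intro ε hε
    filter_upwards [hlim.eventually_lt_const hε] with n hn p hp
    exact (Real.dist_sqrt_sqrt_add_le (sub_nonneg.2 hp.1.1) (by positivity)).trans_lt hn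
  · rintro ⟨M, hM⟩
    have hsegment : LipschitzWith 1 fun t : ℝ => (a + t, c) := by
      simpa using ((LipschitzWith.const a).add LipschitzWith.id).prodMk (LipschitzWith.const c)
    refine Real.not_lipschitzOnWith_sqrt_Icc (sub_pos.2 hab) (M * 1) ?_
    have hmaps : MapsTo (fun t : ℝ => (a + t, c)) (Icc 0 (b - a)) S := fun t ht =>
      ⟨⟨by linarith [ht.1], by linarith [ht.2]⟩, le_rfl, hcd⟩
    simpa [Function.comp_def] using hM.comp hsegment.lipschitzOnWith hmaps

theorem fractal_operator_not_closed_general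
    (a b c d : ℝ) (hab : a < b) (hcd : c < d)
    (s : ℝ)
    (F L : (ℝ × ℝ → ℝ) → (ℝ × ℝ → ℝ))
    (hLcauchy : ∀ φ : ℕ → ℝ × ℝ → ℝ,
      (∀ n, ∃ M : NNReal, LipschitzOnWith M (φ n) ((Icc a b) ×ˢ (Icc c d))) →
      UniformCauchySeqOn φ atTop ((Icc a b) ×ˢ (Icc c d)) →
      UniformCauchySeqOn (fun n => L (φ n)) atTop ((Icc a b) ×ˢ (Icc c d)))
    (hFmaps : ∀ φ : ℝ × ℝ → ℝ, (∃ M : NNReal, LipschitzOnWith M φ ((Icc a b) ×ˢ (Icc c d))) →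
      ContinuousOn (F φ) ((Icc a b) ×ˢ (Icc c d)))
    (hF : ∀ φ ψ : ℝ × ℝ → ℝ,
      (∃ M : NNReal, LipschitzOnWith M φ ((Icc a b) ×ˢ (Icc c d))) →
      (∃ M : NNReal, LipschitzOnWith M ψ ((Icc a b) ×ˢ (Icc c d))) →
      supOn ((Icc a b) ×ˢ (Icc c d)) (fun p => F φ p - F ψ p) ≤
        (1 / (1 - s)) * supOn ((Icc a b) ×ˢ (Icc c d)) (fun p => φ p - ψ p) +
        (s / (1 - s)) * supOn ((Icc a b) ×ˢ (Icc c d)) (fun p => L φ p - L ψ p)) :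
    ∃ (fseq : ℕ → ℝ × ℝ → ℝ) (f k : ℝ × ℝ → ℝ),
      (∀ n, ∃ M : NNReal, LipschitzOnWith M (fseq n) ((Icc a b) ×ˢ (Icc c d))) ∧
      ContinuousOn f ((Icc a b) ×ˢ (Icc c d)) ∧
      ContinuousOn k ((Icc a b) ×ˢ (Icc c d)) ∧
      TendstoUniformlyOn fseq f atTop ((Icc a b) ×ˢ (Icc c d)) ∧
      TendstoUniformlyOn (fun n => F (fseq n)) k atTop ((Icc a b) ×ˢ (Icc c d)) ∧
      (¬ (∃ M : NNReal, LipschitzOnWith M f ((Icc a b) ×ˢ (Icc c d))) ∨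
        ¬ EqOn (F f) k ((Icc a b) ×ˢ (Icc c d))) := by
  obtain ⟨u, f, hu_lip, hf_cont, hu_lim, hf_not_lip⟩ :=
    exists_lipschitzOnWith_tendstoUniformlyOn_not_lipschitzOnWith hab hcd.le
  have hFu_cont n : ContinuousOn (F (u n)) (Icc a b ×ˢ Icc c d) := hFmaps _ (hu_lip n)
  have hFu_cauchy : UniformCauchySeqOn (fun n => F (u n)) atTop (Icc a b ×ˢ Icc c d) :=
    hu_lim.uniformCauchySeqOn.of_supOn_sub_le (isCompact_Icc.prod isCompact_Icc) hFu_cont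
      (hLcauchy u hu_lip hu_lim.uniformCauchySeqOn) fun m n => hF _ _ (hu_lip m) (hu_lip n)
  obtain ⟨k, hk⟩ := hFu_cauchy.exists_tendstoUniformlyOn
  exact ⟨u, f, k, hu_lip, hf_cont, hk.continuousOn (Frequently.of_forall hFu_cont), hu_lim, hk,
    Or.inl hf_not_lip⟩

/-- If the parameter map `L : Lip(I×J) → Lip(I×J)` maps Cauchy
sequences (in sup norm) to Cauchy sequences, then the α-fractal operator `F`
(satisfying the relative Lipschitz estimate) is not a closed operator: there
exist Lipschitz functions `fₙ` and continuous `f, k` with `fₙ → f` and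
`F fₙ → k` uniformly, yet `f` is not Lipschitz or `F f ≠ k` on `I×J`. -/
theorem fractal_operator_not_closed
    (a b c d : ℝ) (hab : a < b) (hcd : c < d)
    (s : ℝ) (hs0 : 0 ≤ s) (hs1 : s < 1)
    (F L : (ℝ × ℝ → ℝ) → (ℝ × ℝ → ℝ))
    (hLmaps : ∀ φ : ℝ × ℝ → ℝ, (∃ M : NNReal, LipschitzOnWith M φ ((Icc a b) ×ˢ (Icc c d))) →
      ∃ M : NNReal, LipschitzOnWith M (L φ) ((Icc a b) ×ˢ (Icc c d)))
    (hLcauchy : ∀ φ : ℕ → ℝ × ℝ → ℝ,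
      (∀ n, ∃ M : NNReal, LipschitzOnWith M (φ n) ((Icc a b) ×ˢ (Icc c d))) →
      UniformCauchySeqOn φ atTop ((Icc a b) ×ˢ (Icc c d)) →
      UniformCauchySeqOn (fun n => L (φ n)) atTop ((Icc a b) ×ˢ (Icc c d)))
    (hFmaps : ∀ φ : ℝ × ℝ → ℝ, (∃ M : NNReal, LipschitzOnWith M φ ((Icc a b) ×ˢ (Icc c d))) →
      ContinuousOn (F φ) ((Icc a b) ×ˢ (Icc c d)))
    (hF : ∀ φ ψ : ℝ × ℝ → ℝ,
      (∃ M : NNReal, LipschitzOnWith M φ ((Icc a b) ×ˢ (Icc c d))) →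
      (∃ M : NNReal, LipschitzOnWith M ψ ((Icc a b) ×ˢ (Icc c d))) →
      supOn ((Icc a b) ×ˢ (Icc c d)) (fun p => F φ p - F ψ p) ≤
        (1 / (1 - s)) * supOn ((Icc a b) ×ˢ (Icc c d)) (fun p => φ p - ψ p) +
        (s / (1 - s)) * supOn ((Icc a b) ×ˢ (Icc c d)) (fun p => L φ p - L ψ p)) :
    ∃ (fseq : ℕ → ℝ × ℝ → ℝ) (f k : ℝ × ℝ → ℝ),
      (∀ n, ∃ M : NNReal, LipschitzOnWith M (fseq n) ((Icc a b) ×ˢ (Icc c d))) ∧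
      ContinuousOn f ((Icc a b) ×ˢ (Icc c d)) ∧
      ContinuousOn k ((Icc a b) ×ˢ (Icc c d)) ∧
      TendstoUniformlyOn fseq f atTop ((Icc a b) ×ˢ (Icc c d)) ∧
      TendstoUniformlyOn (fun n => F (fseq n)) k atTop ((Icc a b) ×ˢ (Icc c d)) ∧
      (¬ (∃ M : NNReal, LipschitzOnWith M f ((Icc a b) ×ˢ (Icc c d))) ∨
        ¬ EqOn (F f) k ((Icc a b) ×ˢ (Icc c d))) :=
  fractal_operator_not_closed_general a b c d hab hcd s F L hLcauchy hFmaps hF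
end
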